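/- arXiv:2202.01580 — 5 statements merged into one kernel-verified Lean document; each statement's English description precedes it below -/
import Mathlib

section
/- For any finite tree T there is a bijection between E_fix(T), the set of legal subsets of E^2(T), and the set of fixed points c of the minority process on T with c(v*)=0 for a fixed distinguished node v*. The bijection sends a fixed point c to its set of monochromatic edges. -/
open SimpleGraph Finset
open scoped Classical

variable {V : Type*}

/-- Number of neighbors of `v` with the same color as `v`. -/
noncomputable def sameCount (G : SimpleGraph V) [Fintype V] (c : V → Bool) (v : V) : ℕ :=
  ((G.neighborFinset v).filter fun u => c u = c v).card

/-- Number of neighbors of `v` with the opposite color. -/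
noncomputable def diffCount (G : SimpleGraph V) [Fintype V] (c : V → Bool) (v : V) : ℕ :=
  ((G.neighborFinset v).filter fun u => c u ≠ c v).card

/-- One round of the minority process. -/
noncomputable def minStep (G : SimpleGraph V) [Fintype V] (c : V → Bool) : V → Bool :=
  fun v => if sameCount G c v ≤ diffCount G c v then c v else !c v

/-- One round of the majority process. -/
noncomputable def majStep (G : SimpleGraph V) [Fintype V] (c : V → Bool) : V → Bool :=
  fun v => if diffCount G c v ≤ sameCount G c v then c v else !c v

/-- Number of edges of `F` incident to `v`. -/
noncomputable def incCount (F : Finset (Sym2 V)) (v : V) : ℕ :=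
  (F.filter fun e => v ∈ e).card

/-- The monochromatic edges of a coloring. -/
noncomputable def monoEdges (G : SimpleGraph V) [Fintype V] (c : V → Bool) : Finset (Sym2 V) :=
  G.edgeFinset.filter fun e => ∀ x ∈ e, ∀ y ∈ e, c x = c y

/-- The multichromatic edges of a coloring. -/
noncomputable def multiEdges (G : SimpleGraph V) [Fintype V] (c : V → Bool) : Finset (Sym2 V) :=
  G.edgeFinset.filter fun e => ∃ x ∈ e, ∃ y ∈ e, c x ≠ c y

/-- Edges of `G` both of whose endpoints have degree at least 2. -/
noncomputable def Etwo (G : SimpleGraph V) [Fintype V] : Finset (Sym2 V) :=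
  G.edgeFinset.filter fun e => ∀ x ∈ e, 2 ≤ G.degree x

/-- `F` is legal: `F ⊆ E²(T)` and `F_v ≤ deg(v)/2` for every node. -/
def legalFix (G : SimpleGraph V) [Fintype V] (F : Finset (Sym2 V)) : Prop :=
  F ⊆ Etwo G ∧ ∀ v, 2 * incCount F v ≤ G.degree v

/-! At every vertex the same-colored neighbours are the endpoints of the incident monochromatic
edges, so `c` is a fixed point exactly when its monochromatic edges satisfy the degree bound
`2 F_v ≤ deg v`; the condition `F ⊆ E²` then comes for free, since a leaf would exceed it.
In a tree a coloring is determined by `c v*` and by which edges are monochromatic, and every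
edge set `F` arises: color `v` by the parity of the number of edges outside `F` on the path
from `v*`. -/

section MinorityFixedPoints

variable [Fintype V] {G : SimpleGraph V}

lemma sameCount_add_diffCount (c : V → Bool) (v : V) :
    sameCount G c v + diffCount G c v = G.degree v := by
  rw [sameCount, diffCount, ← card_neighborFinset_eq_degree]
  exact card_filter_add_card_filter_not _

lemma mem_monoEdges {c : V → Bool} {x y : V} :
    s(x, y) ∈ monoEdges G c ↔ G.Adj x y ∧ c x = c y := by
  simp only [monoEdges, mem_filter, mem_edgeFinset, mem_edgeSet, Sym2.mem_iff]
  refine and_congr_right fun _ => ⟨fun h => h x (.inl rfl) y (.inr rfl), ?_⟩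
  rintro h a (rfl | rfl) b (rfl | rfl) <;> simp [h]

lemma sameCount_eq_incCount_monoEdges (c : V → Bool) (v : V) :
    sameCount G c v = incCount (monoEdges G c) v := by
  refine card_bij (fun u _ => s(u, v)) ?_ (fun _ _ _ _ => Sym2.congr_left.mp) ?_
  · intro u hu
    rw [mem_filter, mem_neighborFinset] at hu
    exact mem_filter.mpr ⟨mem_monoEdges.mpr ⟨hu.1.symm, hu.2⟩, Sym2.mem_mk_right u v⟩
  · intro e he
    obtain ⟨he, hv⟩ := mem_filter.mp he
    obtain ⟨w, rfl⟩ := Sym2.mem_iff_exists.mp hv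
    obtain ⟨hadj, hc⟩ := mem_monoEdges.mp he
    exact ⟨w, mem_filter.mpr ⟨(mem_neighborFinset _ _ _).mpr hadj, hc.symm⟩, Sym2.eq_swap⟩

lemma minStep_eq_self_iff (c : V → Bool) :
    minStep G c = c ↔ ∀ v, 2 * incCount (monoEdges G c) v ≤ G.degree v := by
  have hcount (v : V) : sameCount G c v ≤ diffCount G c v ↔
      2 * incCount (monoEdges G c) v ≤ G.degree v := by
    have := sameCount_add_diffCount (G := G) c v
    rw [← sameCount_eq_incCount_monoEdges]
    omega
  simp only [← hcount, funext_iff, minStep]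
  refine forall_congr' fun v => ?_
  split_ifs with h <;> simp [h]

lemma legalFix_iff {F : Finset (Sym2 V)} (hF : F ⊆ G.edgeFinset) :
    legalFix G F ↔ ∀ v, 2 * incCount F v ≤ G.degree v := by
  refine ⟨And.right, fun hdeg => ⟨fun e he => mem_filter.mpr ⟨hF he, fun x hx => ?_⟩, hdeg⟩⟩
  have : 0 < incCount F x := card_pos.mpr ⟨e, mem_filter.mpr ⟨he, hx⟩⟩
  linarith [hdeg x]

lemma minStep_eq_self_iff_legalFix (c : V → Bool) :
    minStep G c = c ↔ legalFix G (monoEdges G c) :=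
  (minStep_eq_self_iff c).trans (legalFix_iff (filter_subset _ _)).symm

lemma eq_of_monoEdges_eq (hG : G.Preconnected) {c c' : V → Bool}
    (hm : monoEdges G c = monoEdges G c') {u : V} (hu : c u = c' u) : c = c' := by
  funext v
  obtain ⟨p⟩ := hG u v
  induction p with
  | nil => exact hu
  | @cons a b _ hadj _ ih =>
    have hab : c a = c b ↔ c' a = c' b := by
      simpa only [mem_monoEdges, hadj, true_and] using Iff.of_eq (congrArg (s(a, b) ∈ ·) hm)
    refine ih ?_
    revert hab hu
    cases c a <;> cases c b <;> cases c' a <;> cases c' b <;> simp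

end MinorityFixedPoints

namespace SimpleGraph.IsTree

variable {G : SimpleGraph V}

noncomputable def path (hT : G.IsTree) (u v : V) : G.Path u v :=
  (hT.connected u v).some.toPath

lemma path_concat_or (hT : G.IsTree) (u : V) {v w : V} (hadj : G.Adj v w) :
    (hT.path u w : G.Walk u w) = (hT.path u v : G.Walk u v).concat hadj ∨
      (hT.path u v : G.Walk u v) = (hT.path u w : G.Walk u w).concat hadj.symm := by
  by_cases hw : w ∈ (hT.path u v : G.Walk u v).support
  · exact .inr <| hT.isAcyclic.path_concat (hT.path u w).2 (hT.path u v).2 hadj.symm hw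
  · exact .inl <| hT.isAcyclic.path_concat (hT.path u v).2 (hT.path u w).2 hadj <|
      hT.isAcyclic.mem_support_of_ne_mem_support_of_adj_of_isPath (hT.path u w).2
        (hT.path u v).2 hadj.symm hw

noncomputable def parityColoring (hT : G.IsTree) (u : V) (F : Finset (Sym2 V))
    (v : V) : Bool :=
  Nat.bodd ((hT.path u v : G.Walk u v).edges.countP (· ∉ F))

lemma parityColoring_self (hT : G.IsTree) (u : V) (F : Finset (Sym2 V)) :
    hT.parityColoring u F u = false := by
  rw [parityColoring, (hT.isAcyclic.subsingleton_path u u).elim (hT.path u u) Path.nil]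
  simp

lemma parityColoring_eq_iff (hT : G.IsTree) (u : V) (F : Finset (Sym2 V))
    {v w : V} (hadj : G.Adj v w) :
    hT.parityColoring u F v = hT.parityColoring u F w ↔ s(v, w) ∈ F := by
  have hstep {a b : V} (h : G.Adj a b)
      (hab : (hT.path u b : G.Walk u b) = (hT.path u a : G.Walk u a).concat h) :
      hT.parityColoring u F b = xor (hT.parityColoring u F a) (decide (s(a, b) ∉ F)) := by
    simp only [parityColoring, hab, Walk.edges_concat, List.concat_eq_append,
      List.countP_append, Nat.bodd_add]
    by_cases hF : s(a, b) ∈ F <;> simp [hF]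
  rcases hT.path_concat_or u hadj with h | h
  · rw [hstep hadj h]
    by_cases hF : s(v, w) ∈ F <;> simp [hF]
  · rw [hstep hadj.symm h, Sym2.eq_swap]
    by_cases hF : s(v, w) ∈ F <;> simp [hF]

lemma monoEdges_parityColoring [Fintype V] (hT : G.IsTree) (u : V)
    {F : Finset (Sym2 V)} (hF : F ⊆ G.edgeFinset) :
    monoEdges G (hT.parityColoring u F) = F := by
  ext e
  induction e using Sym2.ind with
  | _ x y =>
    rw [mem_monoEdges]
    refine ⟨fun ⟨hadj, hc⟩ => (hT.parityColoring_eq_iff u F hadj).mp hc, fun he => ?_⟩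
    have hadj : G.Adj x y := mem_edgeFinset.mp (hF he)
    exact ⟨hadj, (hT.parityColoring_eq_iff u F hadj).mpr he⟩

end SimpleGraph.IsTree

theorem stmt3 [Fintype V] (G : SimpleGraph V) (hT : G.IsTree) (vstar : V) :
    Set.BijOn (fun c => monoEdges G c)
      {c : V → Bool | minStep G c = c ∧ c vstar = false}
      {F | legalFix G F} := by
  refine ⟨fun c hc => (minStep_eq_self_iff_legalFix c).mp hc.1, ?_, ?_⟩
  · rintro c ⟨-, hc⟩ c' ⟨-, hc'⟩ hm
    exact eq_of_monoEdges_eq hT.connected.preconnected hm (hc.trans hc'.symm)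
  · intro F hF
    have hFE : F ⊆ G.edgeFinset := hF.1.trans (filter_subset _ _)
    have hmono := hT.monoEdges_parityColoring vstar hFE
    refine ⟨hT.parityColoring vstar F, ⟨?_, hT.parityColoring_self vstar F⟩, hmono⟩
    rw [minStep_eq_self_iff_legalFix, hmono]
    exact hF
end

section
/- Every finite tree has an independent coloring that is a fixed point of the minority process, and it has a non-independent fixed point of the minority process if and only if it has at least two inner (non-leaf) nodes. -/
/-! A proper 2-coloring of a tree is a fixed point, since no node has a neighbor of its own color.
In a fixed point, an endpoint of a monochromatic edge also has a neighbor of the other color, so it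
is inner. Conversely, two inner nodes give two adjacent inner nodes `u`, `w` (the first step of the
path between them). Flipping a proper 2-coloring on the `w`-side of the bridge `s(u, w)` leaves it
as the only monochromatic edge, and each of its endpoints then sees one neighbor of its own color
against at least one of the other. -/

open SimpleGraph Finset
open scoped Classical

variable {V : Type*}

namespace SimpleGraph

variable {G : SimpleGraph V} {c : V → Bool} {u v w : V}

lemma Colorable.exists_bool_forall_adj_ne (hG : G.Colorable 2) :
    ∃ c : V → Bool, ∀ u w, G.Adj u w → c u ≠ c w :=
  ⟨finTwoEquiv ∘ hG.some, fun _ _ h => finTwoEquiv.injective.ne (hG.some.valid h)⟩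

lemma IsAcyclic.exists_bool_mono_imp_eq (hG : G.IsAcyclic) (huw : G.Adj u w) :
    ∃ c : V → Bool, c u = c w ∧ ∀ x y, G.Adj x y → c x = c y → s(x, y) = s(u, w) := by
  obtain ⟨c₀, hc₀⟩ := hG.colorable_two.exists_bool_forall_adj_ne
  set H := G.deleteEdges {s(u, w)}
  have hbridge : ¬ H.Reachable w u := fun h =>
    isBridge_iff.mp (isAcyclic_iff_forall_adj_isBridge.mp hG huw) h.symm
  refine ⟨fun v => xor (c₀ v) (decide (H.Reachable w v)), ?_, fun x y hxy hc => ?_⟩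
  · simpa [hbridge, Bool.eq_not_iff] using hc₀ u w huw
  · by_contra hne
    have hHxy : H.Adj x y := deleteEdges_adj.mpr ⟨hxy, hne⟩
    have hside : H.Reachable w x ↔ H.Reachable w y :=
      ⟨fun h => h.trans hHxy.reachable, fun h => h.trans hHxy.symm.reachable⟩
    simp only [hside] at hc
    exact hc₀ x y hxy (by simpa using hc)

variable [Fintype V]

lemma two_le_degree_iff : 2 ≤ G.degree v ↔ ∃ a, G.Adj v a ∧ ∃ b, G.Adj v b ∧ a ≠ b := by
  change 1 < #(G.neighborFinset v) ↔ _
  simp only [Finset.one_lt_card, mem_neighborFinset]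

lemma Connected.exists_adj_two_le_degree (hG : G.Connected) (huw : u ≠ w)
    (hu : 2 ≤ G.degree u) (hw : 2 ≤ G.degree w) :
    ∃ a b, G.Adj a b ∧ 2 ≤ G.degree a ∧ 2 ≤ G.degree b := by
  obtain ⟨p, hp⟩ := (hG.preconnected u w).exists_isPath
  cases p with
  | nil => exact absurd rfl huw
  | cons hub q =>
    cases q with
    | nil => exact ⟨_, _, hub, hu, hw⟩
    | @cons b d _ hbd q =>
      have hud : u ≠ d := by
        rintro rfl
        simp at hp
      exact ⟨_, _, hub, hu, two_le_degree_iff.mpr ⟨_, hub.symm, _, hbd, hud⟩⟩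

lemma sameCount_add_diffCount (G : SimpleGraph V) (c : V → Bool) (v : V) :
    sameCount G c v + diffCount G c v = G.degree v := by
  rw [← card_neighborFinset_eq_degree]
  exact card_filter_add_card_filter_not _

lemma minStep_eq_self_iff : minStep G c = c ↔ ∀ v, sameCount G c v ≤ diffCount G c v := by
  refine ⟨fun h v => ?_, fun h => funext fun v => if_pos (h v)⟩
  by_contra hlt
  have hv := congrFun h v
  rw [minStep, if_neg hlt] at hv
  exact Bool.not_ne_self (c v) hv

lemma two_le_degree_of_minStep_eq_self (hfix : minStep G c = c) (huw : G.Adj u w)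
    (hc : c u = c w) : 2 ≤ G.degree u := by
  have hsame : 0 < sameCount G c u :=
    card_pos.mpr ⟨w, mem_filter.mpr ⟨(mem_neighborFinset G u w).mpr huw, hc.symm⟩⟩
  have := minStep_eq_self_iff.mp hfix u
  have := sameCount_add_diffCount G c u
  omega

lemma minStep_eq_self_of_forall_adj_ne (hc : ∀ u w, G.Adj u w → c u ≠ c w) :
    minStep G c = c := by
  refine minStep_eq_self_iff.mpr fun v => ?_
  have hzero : sameCount G c v = 0 :=
    card_eq_zero.mpr <| filter_eq_empty_iff.mpr fun u hu =>
      (hc v u ((mem_neighborFinset G v u).mp hu)).symm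
  omega

lemma minStep_eq_self_of_mono_imp_eq
    (hmono : ∀ x y, G.Adj x y → c x = c y → s(x, y) = s(u, w))
    (hu : 2 ≤ G.degree u) (hw : 2 ≤ G.degree w) : minStep G c = c := by
  refine minStep_eq_self_iff.mpr fun v => ?_
  have hsum := sameCount_add_diffCount G c v
  have hle_one : sameCount G c v ≤ 1 := by
    refine card_le_one.mpr fun x hx y hy => ?_
    simp only [mem_filter, mem_neighborFinset] at hx hy
    exact Sym2.congr_right.mp ((hmono v x hx.1 hx.2.symm).trans (hmono v y hy.1 hy.2.symm).symm)
  rcases Nat.eq_zero_or_pos (sameCount G c v) with hzero | hpos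
  · omega
  · obtain ⟨x, hx⟩ := card_pos.mp hpos
    simp only [mem_filter, mem_neighborFinset] at hx
    have hdeg : 2 ≤ G.degree v := by
      rcases Sym2.mem_iff.mp (hmono v x hx.1 hx.2.symm ▸ Sym2.mem_mk_left v x) with rfl | rfl
      exacts [hu, hw]
    omega

end SimpleGraph

open SimpleGraph in
theorem stmt5 [Fintype V] (G : SimpleGraph V) (hT : G.IsTree) :
    (∃ c : V → Bool, minStep G c = c ∧ ∀ u w, G.Adj u w → c u ≠ c w) ∧
    ((∃ c : V → Bool, minStep G c = c ∧ ¬ (∀ u w, G.Adj u w → c u ≠ c w)) ↔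
      ∃ u w : V, u ≠ w ∧ 2 ≤ G.degree u ∧ 2 ≤ G.degree w) := by
  refine ⟨?_, ?_, ?_⟩
  · obtain ⟨c, hc⟩ := hT.isAcyclic.colorable_two.exists_bool_forall_adj_ne
    exact ⟨c, minStep_eq_self_of_forall_adj_ne hc, hc⟩
  · rintro ⟨c, hfix, hmono⟩
    push Not at hmono
    obtain ⟨u, w, huw, hc⟩ := hmono
    exact ⟨u, w, huw.ne, two_le_degree_of_minStep_eq_self hfix huw hc,
      two_le_degree_of_minStep_eq_self hfix huw.symm hc.symm⟩
  · rintro ⟨u₀, w₀, hne, hu₀, hw₀⟩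
    obtain ⟨u, w, huw, hu, hw⟩ := hT.connected.exists_adj_two_le_degree hne hu₀ hw₀
    obtain ⟨c, hc, hmono⟩ := hT.isAcyclic.exists_bool_mono_imp_eq huw
    exact ⟨c, minStep_eq_self_of_mono_imp_eq hmono hu hw, fun h => h u w huw hc⟩
end

section
/- The number of fixed points of the minority process on a path with n ≥ 2 nodes equals 2·F_{n-1}, where F_k is the k-th Fibonacci number (F_0=0, F_1=1). -/
open SimpleGraph Finset
open scoped Classical

variable {V : Type*}

/-- index condition -/
def P (n : ℕ) (c : Fin n → Bool) : Prop :=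
  ∀ i : Fin n, ∃ j : Fin n, ((j : ℕ) + 1 = i ∨ (i : ℕ) + 1 = j) ∧ c j ≠ c i

lemma sum_counts (n : ℕ) (c : Fin n → Bool) (v : Fin n) :
    sameCount (pathGraph n) c v + diffCount (pathGraph n) c v
      = ((pathGraph n).neighborFinset v).card := by
  classical
  simpa [sameCount, diffCount] using
    Finset.card_filter_add_card_filter_not
      (s := (pathGraph n).neighborFinset v) (p := fun u => c u = c v)

lemma deg_le_two (n : ℕ) (v : Fin n) :
    ((pathGraph n).neighborFinset v).card ≤ 2 := by
  classical
  have hsub : (pathGraph n).neighborFinset v ⊆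
      (univ.filter fun u : Fin n => (u : ℕ) + 1 = (v : ℕ)) ∪
      (univ.filter fun u : Fin n => (v : ℕ) + 1 = (u : ℕ)) := by
    intro u hu
    rw [mem_neighborFinset, pathGraph_adj] at hu
    simp only [mem_union, mem_filter, mem_univ, true_and]
    omega
  calc ((pathGraph n).neighborFinset v).card ≤ _ := Finset.card_le_card hsub
    _ ≤ _ + _ := Finset.card_union_le _ _
    _ ≤ 1 + 1 := by
        gcongr <;> rw [Finset.card_le_one] <;> intro a ha b hb <;>
          simp only [mem_filter] at ha hb <;> exact Fin.ext (by omega)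

lemma deg_ge_one (n : ℕ) (hn : 2 ≤ n) (v : Fin n) :
    1 ≤ ((pathGraph n).neighborFinset v).card := by
  classical
  rw [Nat.one_le_iff_ne_zero, Ne, Finset.card_eq_zero, ← Ne,
    ← Finset.nonempty_iff_ne_empty]
  by_cases h : (v : ℕ) + 1 < n
  · exact ⟨⟨v + 1, h⟩, by rw [mem_neighborFinset, pathGraph_adj]; left; rfl⟩
  · refine ⟨⟨(v : ℕ) - 1, by omega⟩, ?_⟩
    rw [mem_neighborFinset, pathGraph_adj]
    right
    have := v.isLt
    simp only []
    omega

set_option maxHeartbeats 1000000 in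
lemma fixed_iff (n : ℕ) (hn : 2 ≤ n) (c : Fin n → Bool) :
    minStep (pathGraph n) c = c ↔ P n c := by
  classical
  rw [funext_iff]
  apply forall_congr'
  intro v
  have h1 : minStep (pathGraph n) c v = c v ↔
      sameCount (pathGraph n) c v ≤ diffCount (pathGraph n) c v := by
    by_cases h : sameCount (pathGraph n) c v ≤ diffCount (pathGraph n) c v <;>
      simp [minStep, h]
  rw [h1]
  have hsum := sum_counts n c v
  have h2 := deg_le_two n v
  have h3 := deg_ge_one n hn v
  have h4 : (1 ≤ diffCount (pathGraph n) c v) ↔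
      ∃ j : Fin n, ((j : ℕ) + 1 = v ∨ (v : ℕ) + 1 = j) ∧ c j ≠ c v := by
    rw [diffCount, Nat.one_le_iff_ne_zero, Ne, Finset.card_eq_zero, ← Ne,
      ← Finset.nonempty_iff_ne_empty]
    constructor
    · rintro ⟨u, hu⟩
      simp only [mem_filter, mem_neighborFinset, pathGraph_adj] at hu
      obtain ⟨hadj, hne⟩ := hu
      exact ⟨u, by omega, hne⟩
    · rintro ⟨j, hj1, hj2⟩
      refine ⟨j, ?_⟩
      simp only [mem_filter, mem_neighborFinset, pathGraph_adj]
      exact ⟨by omega, hj2⟩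
  rw [← h4]
  omega

/-- nat-indexed good condition -/
def Q (n : ℕ) (c : Fin n → Bool) : Prop :=
  ∀ i, ∀ hi : i < n, ∃ j, ∃ hj : j < n,
    (j + 1 = i ∨ i + 1 = j) ∧ c ⟨j, hj⟩ ≠ c ⟨i, hi⟩

noncomputable def Fn (m : ℕ) : Finset (Fin m → Bool) := univ.filter (Q m)

def ext1 {m : ℕ} (c : Fin (m + 1) → Bool) : Fin (m + 2) → Bool :=
  Fin.cons (!(c 0)) c

def ext2 {m : ℕ} (c : Fin (m + 1) → Bool) : Fin (m + 3) → Bool :=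
  Fin.cons (!(c 0)) (Fin.cons (c 0) c)

lemma cons_mk_zero {m : ℕ} (x : Bool) (c : Fin m → Bool) (h : 0 < m + 1) :
    (Fin.cons x c : Fin (m + 1) → Bool) ⟨0, h⟩ = x := rfl

lemma cons_mk_succ {m : ℕ} (x : Bool) (c : Fin m → Bool) (k : ℕ) (h : k + 1 < m + 1) :
    (Fin.cons x c : Fin (m + 1) → Bool) ⟨k + 1, h⟩ = c ⟨k, Nat.lt_of_succ_lt_succ h⟩ := by
  rw [show (⟨k + 1, h⟩ : Fin (m + 1)) = Fin.succ ⟨k, Nat.lt_of_succ_lt_succ h⟩ from rfl,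
    Fin.cons_succ]

lemma tail_zero {m : ℕ} (c : Fin (m + 2) → Bool) : Fin.tail c 0 = c ⟨1, by omega⟩ := rfl

lemma tail_mk {m : ℕ} (c : Fin (m + 1) → Bool) (k : ℕ) (h : k < m) :
    Fin.tail c ⟨k, h⟩ = c ⟨k + 1, Nat.succ_lt_succ h⟩ := rfl

lemma c_zero {m : ℕ} (c : Fin (m + 1) → Bool) (h : 0 < m + 1) : c 0 = c ⟨0, h⟩ := rfl

lemma Q_firstTwo {m : ℕ} (c : Fin (m + 2) → Bool) (h : Q (m + 2) c) :
    c ⟨1, by omega⟩ ≠ c ⟨0, by omega⟩ := by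
  obtain ⟨j, hj, hor, hne⟩ := h 0 (by omega)
  have hj1 : j = 1 := by omega
  subst hj1
  exact hne

lemma Q_ext1 {m : ℕ} (c : Fin (m + 1) → Bool) (h : Q (m + 1) c) : Q (m + 2) (ext1 c) := by
  intro i hi
  match i with
  | 0 =>
    refine ⟨1, by omega, by omega, ?_⟩
    rw [ext1, cons_mk_succ, cons_mk_zero]
    exact Bool.self_ne_not (c 0)
  | (k + 1) =>
    obtain ⟨j, hj, hor, hne⟩ := h k (by omega)
    refine ⟨j + 1, by omega, by omega, ?_⟩
    rw [ext1, cons_mk_succ, cons_mk_succ]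
    exact hne

lemma Q_ext2 {m : ℕ} (c : Fin (m + 1) → Bool) (h : Q (m + 1) c) : Q (m + 3) (ext2 c) := by
  intro i hi
  match i with
  | 0 =>
    refine ⟨1, by omega, by omega, ?_⟩
    rw [ext2, cons_mk_succ, cons_mk_zero, cons_mk_zero]
    exact Bool.self_ne_not (c 0)
  | 1 =>
    refine ⟨0, by omega, by omega, ?_⟩
    rw [ext2, cons_mk_succ, cons_mk_zero, cons_mk_zero]
    exact Bool.not_ne_self (c 0)
  | (k + 2) =>
    obtain ⟨j, hj, hor, hne⟩ := h k (by omega)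
    refine ⟨j + 2, by omega, by omega, ?_⟩
    rw [ext2, cons_mk_succ, cons_mk_succ, cons_mk_succ, cons_mk_succ]
    exact hne

lemma Q_split {m : ℕ} (c : Fin (m + 3) → Bool) (h : Q (m + 3) c) :
    (∃ d, Q (m + 2) d ∧ c = ext1 d) ∨ (∃ w, Q (m + 1) w ∧ c = ext2 w) := by
  have h01 : c ⟨1, by omega⟩ ≠ c ⟨0, by omega⟩ := Q_firstTwo (m := m + 1) c h
  by_cases h12 : c ⟨2, by omega⟩ = c ⟨1, by omega⟩
  · -- right branch : c = ext2 w
    right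
    -- from position 2, the witness must be 3 (not 1 since c1 = c2)
    obtain ⟨j, hj, hor, hne⟩ := h 2 (by omega)
    have hj3 : j = 3 := by
      rcases hor with h' | h'
      · exfalso
        have : j = 1 := by omega
        subst this
        exact hne h12.symm
      · omega
    subst hj3
    have hm : 1 ≤ m := by omega
    refine ⟨fun i => c ⟨i.val + 2, by omega⟩, ?_, ?_⟩
    · intro i hi
      match i with
      | 0 =>
        refine ⟨1, by omega, by omega, ?_⟩
        exact hne
      | (k + 1) =>
        obtain ⟨j, hj', hor', hne'⟩ := h (k + 3) (by omega)
        have hj2 : 2 ≤ j := by omega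
        refine ⟨j - 2, by omega, by omega, ?_⟩
        simpa [Nat.sub_add_cancel hj2] using hne'
    · funext x
      obtain ⟨i, hi⟩ := x
      match i with
      | 0 =>
        rw [ext2, cons_mk_zero]
        show c ⟨0, hi⟩ = !(c ⟨2, by omega⟩)
        revert h01 h12
        cases c ⟨0, by omega⟩ <;> cases c ⟨1, by omega⟩ <;> cases c ⟨2, by omega⟩ <;> simp
      | 1 =>
        rw [ext2, cons_mk_succ, cons_mk_zero]
        exact h12.symm
      | (k + 2) =>
        rw [ext2, cons_mk_succ, cons_mk_succ]
  · -- left branch : c = ext1 (tail c)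
    left
    refine ⟨Fin.tail c, ?_, ?_⟩
    · intro i hi
      match i with
      | 0 =>
        refine ⟨1, by omega, by omega, ?_⟩
        rw [tail_mk, tail_mk]
        exact h12
      | (k + 1) =>
        obtain ⟨j, hj, hor, hne⟩ := h (k + 2) (by omega)
        have hj1 : 1 ≤ j := by omega
        refine ⟨j - 1, by omega, by omega, ?_⟩
        rw [tail_mk, tail_mk]
        simpa [Nat.sub_add_cancel hj1] using hne
    · funext x
      obtain ⟨i, hi⟩ := x
      match i with
      | 0 =>
        rw [ext1, cons_mk_zero]
        show c ⟨0, hi⟩ = !(c ⟨1, by omega⟩)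
        revert h01
        cases c ⟨0, by omega⟩ <;> cases c ⟨1, by omega⟩ <;> simp
      | (k + 1) =>
        rw [ext1, cons_mk_succ, tail_mk]

lemma ext1_injective {m : ℕ} : Function.Injective (ext1 (m := m)) := by
  intro a b hab
  have := congrArg Fin.tail hab
  simpa [ext1, Fin.tail_cons] using this

lemma ext2_injective {m : ℕ} : Function.Injective (ext2 (m := m)) := by
  intro a b hab
  have := congrArg Fin.tail (congrArg Fin.tail hab)
  simpa [ext2, Fin.tail_cons] using this

lemma Fn_succ (m : ℕ) : Fn (m + 3) = (Fn (m + 2)).image ext1 ∪ (Fn (m + 1)).image ext2 := by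
  ext c
  simp only [Fn, mem_filter, mem_univ, true_and, mem_union, mem_image]
  constructor
  · intro h
    rcases Q_split c h with ⟨d, hd, rfl⟩ | ⟨w, hw, rfl⟩
    · exact Or.inl ⟨d, hd, rfl⟩
    · exact Or.inr ⟨w, hw, rfl⟩
  · rintro (⟨d, hd, rfl⟩ | ⟨w, hw, rfl⟩)
    · exact Q_ext1 d hd
    · exact Q_ext2 w hw

lemma Fn_disj (m : ℕ) : Disjoint ((Fn (m + 2)).image ext1) ((Fn (m + 1)).image ext2) := by
  rw [Finset.disjoint_left]
  rintro a ha hb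
  simp only [mem_image, Fn, mem_filter, mem_univ, true_and] at ha hb
  obtain ⟨d, hd, rfl⟩ := ha
  obtain ⟨w, hw, he⟩ := hb
  have hd2 := Q_firstTwo d hd
  apply hd2
  have e1 := congrFun he ⟨1, by omega⟩
  have e2 := congrFun he ⟨2, by omega⟩
  rw [ext1, ext2, cons_mk_succ, cons_mk_succ, cons_mk_zero] at e1
  rw [ext1, ext2, cons_mk_succ, cons_mk_succ, cons_mk_succ] at e2
  exact e2.symm.trans e1

lemma card_Fn_rec (m : ℕ) : (Fn (m + 3)).card = (Fn (m + 2)).card + (Fn (m + 1)).card := by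
  rw [Fn_succ, Finset.card_union_of_disjoint (Fn_disj m),
    Finset.card_image_of_injective _ ext1_injective,
    Finset.card_image_of_injective _ ext2_injective]

lemma Fn_one : Fn 1 = ∅ := by
  rw [Finset.eq_empty_iff_forall_notMem]
  intro c hc
  simp only [Fn, mem_filter] at hc
  obtain ⟨j, hj, hor, hne⟩ := hc.2 0 (by omega)
  omega

lemma card_Fn_two : (Fn 2).card = 2 := by
  have h : Fn 2 = (univ.filter fun c : Fin 2 → Bool => c 1 ≠ c 0) := by
    ext c
    simp only [Fn, mem_filter, mem_univ, true_and]
    constructor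
    · intro h
      obtain ⟨j, hj, hor, hne⟩ := h 0 (by omega)
      have hj1 : j = 1 := by omega
      subst hj1
      exact hne
    · intro h i hi
      match i with
      | 0 => exact ⟨1, by omega, by omega, h⟩
      | 1 => exact ⟨0, by omega, by omega, Ne.symm h⟩
  rw [h]
  decide

lemma card_Fn (m : ℕ) : (Fn (m + 2)).card = 2 * Nat.fib (m + 1) := by
  induction m using Nat.strong_induction_on with
  | _ m ih =>
    match m with
    | 0 => simpa using card_Fn_two
    | 1 =>
      have h := card_Fn_rec 0
      rw [Fn_one, card_Fn_two] at h
      simpa using h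
    | (m + 2) =>
      have h := card_Fn_rec (m + 1)
      rw [ih (m + 1) (by omega), ih m (by omega)] at h
      have hf : Nat.fib (m + 3) = Nat.fib (m + 1) + Nat.fib (m + 2) := Nat.fib_add_two
      have e1 : m + 1 + 3 = m + 2 + 2 := rfl
      have e2 : m + 1 + 1 = m + 2 := rfl
      rw [e1, e2] at h
      have e3 : m + 2 + 1 = m + 3 := rfl
      rw [e3]
      omega

lemma P_iff_Q (n : ℕ) (c : Fin n → Bool) : P n c ↔ Q n c := by
  constructor
  · intro h i hi
    obtain ⟨j, hor, hne⟩ := h ⟨i, hi⟩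
    exact ⟨j.val, j.isLt, by simpa using hor, by simpa [Fin.eta] using hne⟩
  · intro h i
    obtain ⟨j, hj, hor, hne⟩ := h i.val i.isLt
    exact ⟨⟨j, hj⟩, by simpa using hor, by simpa [Fin.eta] using hne⟩

theorem stmt10 (n : ℕ) (hn : 2 ≤ n) :
    Nat.card {c : Fin n → Bool // minStep (pathGraph n) c = c} = 2 * Nat.fib (n - 1) := by
  obtain ⟨m, rfl⟩ : ∃ m, n = m + 2 := ⟨n - 2, by omega⟩
  have he : ∀ c : Fin (m + 2) → Bool,
      (minStep (pathGraph (m + 2)) c = c) ↔ Q (m + 2) c := fun c =>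
    (fixed_iff (m + 2) (by omega) c).trans (P_iff_Q (m + 2) c)
  rw [Nat.card_congr (Equiv.subtypeEquivRight he), Nat.card_eq_fintype_card,
    Fintype.card_subtype]
  have h := card_Fn m
  rw [Fn] at h
  rw [show m + 2 - 1 = m + 1 from rfl]
  convert h using 2
end

section
/- Let T be a tree and c a pure 2-cycle of the minority process on T. If e=(u,w) is an edge with c(u)≠c(w), then deg(u)≥3 and deg(w)≥3, the two components T_u, T_w of T after removing e each contain at least 3 nodes, and c restricted to each component is again a pure 2-cycle of the minority process on that component. -/
open SimpleGraph Finset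
open scoped Classical

variable {V : Type*}

/-!
A pure 2-cycle is exactly a coloring in which every node has more same-colored than
differently colored neighbors. The endpoint `u` of a bichromatic edge has at least one
differently colored neighbor, hence at least two same-colored ones: this gives the degree
bound, and `u` with those two neighbors gives three nodes of `T_u`. Deleting a bichromatic
edge keeps every monochromatic edge, so each component contains all same-colored neighbors of
its nodes; restricting to it therefore keeps every same-colored neighbor and can only lose
differently colored ones, and purity survives.
-/

def SameColorClosed (G : SimpleGraph V) (c : V → Bool) (S : Set V) : Prop :=
  ∀ x ∈ S, ∀ y, G.Adj x y → c y = c x → y ∈ S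

theorem sameColorClosed_reachable_deleteEdges {G : SimpleGraph V} {c : V → Bool} {u w : V}
    (hcuw : c u ≠ c w) (a : V) :
    SameColorClosed G c {v | (G.deleteEdges {s(u, w)}).Reachable a v} := by
  intro x hx y hxy hcy
  have hedge : s(x, y) ≠ s(u, w) := by
    rw [Ne, Sym2.eq_iff]
    rintro (⟨rfl, rfl⟩ | ⟨rfl, rfl⟩)
    exacts [hcuw hcy.symm, hcuw hcy]
  have hadj : (G.deleteEdges {s(u, w)}).Adj x y := by
    simpa only [deleteEdges_adj, Set.mem_singleton_iff] using ⟨hxy, hedge⟩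
  exact Reachable.trans hx hadj.reachable

section

variable [Fintype V]

section Counts

variable (G : SimpleGraph V) (c : V → Bool)

theorem degree_eq_sameCount_add_diffCount (v : V) :
    G.degree v = sameCount G c v + diffCount G c v := by
  rw [← card_neighborFinset_eq_degree]
  exact (card_filter_add_card_filter_not (fun x => c x = c v)).symm

theorem sameCount_not (v : V) : sameCount G (fun x => !c x) v = sameCount G c v := by
  simp only [sameCount, Bool.not_inj_iff]

theorem diffCount_not (v : V) : diffCount G (fun x => !c x) v = diffCount G c v := by
  simp only [diffCount, ne_eq, Bool.not_inj_iff]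

theorem minStep_ne_iff (v : V) : minStep G c v ≠ c v ↔ diffCount G c v < sameCount G c v := by
  rw [minStep]
  split_ifs with h
  · simpa using h
  · simp [not_le.mp h]

theorem minStep_eq_not (h : ∀ v, diffCount G c v < sameCount G c v) :
    minStep G c = fun v => !c v := by
  funext v
  simp [minStep, not_le.mpr (h v)]

theorem minStep_isPureTwoCycle_iff :
    ((∀ v, minStep G c v ≠ c v) ∧ minStep G (minStep G c) = c) ↔
      ∀ v, diffCount G c v < sameCount G c v := by
  refine ⟨fun h v => (minStep_ne_iff G c v).1 (h.1 v), fun h => ⟨fun v => ?_, ?_⟩⟩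
  · exact (minStep_ne_iff G c v).2 (h v)
  · have h' : ∀ v, diffCount G (fun x => !c x) v < sameCount G (fun x => !c x) v := by
      simpa only [sameCount_not, diffCount_not] using h
    rw [minStep_eq_not G c h, minStep_eq_not G _ h']
    simp only [Bool.not_not]

end Counts

section Restriction

variable {G : SimpleGraph V} {c : V → Bool} {S : Set V}

theorem three_le_ncard_of_two_le_sameCount
    (hS : SameColorClosed G c S) {a : V} (ha : a ∈ S)
    (h : 2 ≤ sameCount G c a) : 3 ≤ S.ncard := by
  obtain ⟨y₁, hy₁, y₂, hy₂, hne⟩ := one_lt_card.mp h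
  simp only [mem_filter, mem_neighborFinset] at hy₁ hy₂
  have hset : ({a, y₁, y₂} : Set V) ⊆ S := by
    rintro z (rfl | rfl | rfl)
    exacts [ha, hS a ha z hy₁.1 hy₁.2, hS a ha z hy₂.1 hy₂.2]
  calc 3 = ({a, y₁, y₂} : Set V).ncard :=
        (Set.ncard_eq_three.mpr ⟨a, y₁, y₂, hy₁.1.ne, hy₂.1.ne, hne, rfl⟩).symm
    _ ≤ S.ncard := Set.ncard_le_ncard hset

variable [Fintype S]

theorem sameCount_induce (hS : SameColorClosed G c S) (x : S) :
    sameCount (G.induce S) (fun y => c y.1) x = sameCount G c x.1 := by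
  refine card_bij (fun a _ => a.1) (fun a ha => ?_) (fun a _ b _ h => Subtype.val_injective h)
    (fun y hy => ?_)
  · simpa only [mem_filter, mem_neighborFinset, comap_adj, Function.Embedding.coe_subtype]
      using ha
  · simp only [mem_filter, mem_neighborFinset] at hy
    refine ⟨⟨y, hS x.1 x.2 y hy.1 hy.2⟩, ?_, rfl⟩
    simpa only [mem_filter, mem_neighborFinset, comap_adj, Function.Embedding.coe_subtype]
      using hy

theorem diffCount_induce_le (x : S) :
    diffCount (G.induce S) (fun y => c y.1) x ≤ diffCount G c x.1 := by
  refine card_le_card_of_injOn Subtype.val (fun a ha => ?_)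
    (fun a _ b _ h => Subtype.val_injective h)
  simp only [coe_filter, mem_neighborFinset, comap_adj, Function.Embedding.coe_subtype] at ha ⊢
  exact ha

theorem diffCount_lt_sameCount_induce (hS : SameColorClosed G c S)
    (h : ∀ v, diffCount G c v < sameCount G c v) (x : S) :
    diffCount (G.induce S) (fun y => c y.1) x < sameCount (G.induce S) (fun y => c y.1) x := by
  rw [sameCount_induce hS]
  exact (diffCount_induce_le x).trans_lt (h x.1)

end Restriction

section Bichromatic

variable {G : SimpleGraph V} {c : V → Bool} {u w : V}

theorem one_le_diffCount_of_adj (huw : G.Adj u w) (hcuw : c u ≠ c w) : 1 ≤ diffCount G c u :=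
  card_pos.mpr ⟨w, by simp [mem_neighborFinset, huw, Ne.symm hcuw]⟩

variable (h : ∀ v, diffCount G c v < sameCount G c v)
include h

theorem two_le_sameCount_of_adj (huw : G.Adj u w) (hcuw : c u ≠ c w) : 2 ≤ sameCount G c u :=
  (one_le_diffCount_of_adj huw hcuw).trans_lt (h u)

theorem three_le_degree_of_adj (huw : G.Adj u w) (hcuw : c u ≠ c w) : 3 ≤ G.degree u := by
  rw [degree_eq_sameCount_add_diffCount G c]
  have := two_le_sameCount_of_adj h huw hcuw
  have := one_le_diffCount_of_adj huw hcuw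
  omega

end Bichromatic

end

theorem stmt14_general [Fintype V] (G : SimpleGraph V) (c : V → Bool)
    (hpure : (∀ v, minStep G c v ≠ c v) ∧ minStep G (minStep G c) = c)
    (u w : V) (huw : G.Adj u w) (hcuw : c u ≠ c w) :
    3 ≤ G.degree u ∧ 3 ≤ G.degree w ∧
    3 ≤ Set.ncard {v | (G.deleteEdges {s(u, w)}).Reachable u v} ∧
    3 ≤ Set.ncard {v | (G.deleteEdges {s(u, w)}).Reachable w v} ∧
    ((∀ x, minStep (G.induce {v | (G.deleteEdges {s(u, w)}).Reachable u v})
        (fun y => c y.1) x ≠ c x.1) ∧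
      minStep (G.induce {v | (G.deleteEdges {s(u, w)}).Reachable u v})
        (minStep (G.induce {v | (G.deleteEdges {s(u, w)}).Reachable u v}) (fun y => c y.1)) =
        fun y => c y.1) ∧
    ((∀ x, minStep (G.induce {v | (G.deleteEdges {s(u, w)}).Reachable w v})
        (fun y => c y.1) x ≠ c x.1) ∧
      minStep (G.induce {v | (G.deleteEdges {s(u, w)}).Reachable w v})
        (minStep (G.induce {v | (G.deleteEdges {s(u, w)}).Reachable w v}) (fun y => c y.1)) =
        fun y => c y.1) := by
  rw [minStep_isPureTwoCycle_iff] at hpure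
  have hclosed := sameColorClosed_reachable_deleteEdges (G := G) hcuw
  refine ⟨three_le_degree_of_adj hpure huw hcuw, three_le_degree_of_adj hpure huw.symm hcuw.symm,
    ?_, ?_, ?_, ?_⟩
  · exact three_le_ncard_of_two_le_sameCount (hclosed u) Reachable.rfl
      (two_le_sameCount_of_adj hpure huw hcuw)
  · exact three_le_ncard_of_two_le_sameCount (hclosed w) Reachable.rfl
      (two_le_sameCount_of_adj hpure huw.symm hcuw.symm)
  · exact (minStep_isPureTwoCycle_iff _ _).2 (diffCount_lt_sameCount_induce (hclosed u) hpure)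
  · exact (minStep_isPureTwoCycle_iff _ _).2 (diffCount_lt_sameCount_induce (hclosed w) hpure)

theorem stmt14 [Fintype V] (G : SimpleGraph V) (hT : G.IsTree) (c : V → Bool)
    (hpure : (∀ v, minStep G c v ≠ c v) ∧ minStep G (minStep G c) = c)
    (u w : V) (huw : G.Adj u w) (hcuw : c u ≠ c w) :
    3 ≤ G.degree u ∧ 3 ≤ G.degree w ∧
    3 ≤ Set.ncard {v | (G.deleteEdges {s(u, w)}).Reachable u v} ∧
    3 ≤ Set.ncard {v | (G.deleteEdges {s(u, w)}).Reachable w v} ∧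
    ((∀ x, minStep (G.induce {v | (G.deleteEdges {s(u, w)}).Reachable u v})
        (fun y => c y.1) x ≠ c x.1) ∧
      minStep (G.induce {v | (G.deleteEdges {s(u, w)}).Reachable u v})
        (minStep (G.induce {v | (G.deleteEdges {s(u, w)}).Reachable u v}) (fun y => c y.1)) =
        fun y => c y.1) ∧
    ((∀ x, minStep (G.induce {v | (G.deleteEdges {s(u, w)}).Reachable w v})
        (fun y => c y.1) x ≠ c x.1) ∧
      minStep (G.induce {v | (G.deleteEdges {s(u, w)}).Reachable w v})
        (minStep (G.induce {v | (G.deleteEdges {s(u, w)}).Reachable w v}) (fun y => c y.1)) =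
        fun y => c y.1) :=
  stmt14_general G c hpure u w huw hcuw
end

section
/- For every finite tree T on n ≥ 4 nodes, the number of edges whose both endpoints have degree at least 3 is at most (n-4)/2. -/
open SimpleGraph Finset
open scoped Classical

variable {V : Type*}

/-- In a tree, adjacent vertices have different distances to any vertex `r`. -/
lemma tree_adj_dist_ne (G : SimpleGraph V) (hT : G.IsTree) {u w r : V} (h : G.Adj u w) :
    G.dist u r ≠ G.dist w r := by
  intro hd
  have hc := hT.isConnected
  rcases eq_or_ne u r with rfl | hu
  · have : G.dist w u = 0 := by rw [← hd, SimpleGraph.dist_self]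
    exact G.ne_of_adj h ((hc.dist_eq_zero_iff.mp this).symm)
  obtain ⟨pw, hpw⟩ := hc.exists_walk_length_eq_dist w r
  have hpwp : pw.IsPath := pw.isPath_of_length_eq_dist hpw
  by_cases hmem : u ∈ pw.support
  · have hsp := congrArg Walk.length (pw.take_spec hmem)
    rw [Walk.length_append] at hsp
    have h1 : (pw.takeUntil u hmem).length ≠ 0 :=
      fun h0 => G.ne_of_adj h ((Walk.eq_of_length_eq_zero h0).symm)
    have h2 : G.dist u r ≤ (pw.dropUntil u hmem).length := SimpleGraph.dist_le _
    omega
  · obtain ⟨pu, hpu⟩ := hc.exists_walk_length_eq_dist u r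
    have hpup : pu.IsPath := pu.isPath_of_length_eq_dist hpu
    have hqp : (Walk.cons h pw).IsPath := hpwp.cons hmem
    have := hT.IsAcyclic.path_unique ⟨pu, hpup⟩ ⟨Walk.cons h pw, hqp⟩
    have hl := congrArg (fun p : G.Path u r => p.1.length) this
    simp only [Walk.length_cons] at hl
    omega

/-- In a tree there is a unique neighbor strictly closer to `r`. -/
lemma tree_parent_unique (G : SimpleGraph V) (hT : G.IsTree) {u w₁ w₂ r : V}
    (h1 : G.Adj u w₁) (h2 : G.Adj u w₂)
    (hd1 : G.dist w₁ r < G.dist u r) (hd2 : G.dist w₂ r < G.dist u r) : w₁ = w₂ := by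
  have hc := hT.isConnected
  have key : ∀ {w : V}, G.Adj u w → G.dist w r < G.dist u r →
      ∃ p : G.Walk w r, p.length = G.dist w r ∧ G.dist w r + 1 = G.dist u r := by
    intro w hw hwd
    obtain ⟨p, hp⟩ := hc.exists_walk_length_eq_dist w r
    have htri : G.dist u r ≤ G.dist u w + G.dist w r := hc.dist_triangle
    have : G.dist u w = 1 := SimpleGraph.dist_eq_one_iff_adj.mpr hw
    exact ⟨p, hp, by omega⟩
  obtain ⟨p1, hp1, he1⟩ := key h1 hd1
  obtain ⟨p2, hp2, he2⟩ := key h2 hd2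
  have hq1 : (Walk.cons h1 p1).IsPath := by
    apply Walk.isPath_of_length_eq_dist
    rw [Walk.length_cons]; omega
  have hq2 : (Walk.cons h2 p2).IsPath := by
    apply Walk.isPath_of_length_eq_dist
    rw [Walk.length_cons]; omega
  have := hT.IsAcyclic.path_unique ⟨Walk.cons h1 p1, hq1⟩ ⟨Walk.cons h2 p2, hq2⟩
  have hs := congrArg (fun p : G.Path u r => p.1.support) this
  simp only [Walk.support_cons] at hs
  rw [p1.support_eq_cons, p2.support_eq_cons] at hs
  simp only [List.cons.injEq] at hs
  exact hs.2.1

/-- The endpoint of an edge farther from `r`. -/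
noncomputable def farEnd (G : SimpleGraph V) (r : V) (e : Sym2 V) : V :=
  if G.dist e.out.1 r ≤ G.dist e.out.2 r then e.out.2 else e.out.1

lemma farEnd_spec (G : SimpleGraph V) (hT : G.IsTree) (r : V) {e : Sym2 V}
    (he : e ∈ G.edgeSet) :
    ∃ w, e = s(farEnd G r e, w) ∧ G.Adj (farEnd G r e) w ∧
      G.dist w r < G.dist (farEnd G r e) r := by
  have hab : e = s(e.out.1, e.out.2) := by
    conv_lhs => rw [← e.out_eq]
  have hadj : G.Adj e.out.1 e.out.2 := G.mem_edgeSet.mp (hab ▸ he)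
  have hne := tree_adj_dist_ne G hT (r := r) hadj
  unfold farEnd
  by_cases hle : G.dist e.out.1 r ≤ G.dist e.out.2 r
  · rw [if_pos hle]
    exact ⟨e.out.1, hab.trans Sym2.eq_swap, hadj.symm, lt_of_le_of_ne hle hne⟩
  · rw [if_neg hle]
    exact ⟨e.out.2, hab, hadj, by omega⟩
theorem stmt18 [Fintype V] (G : SimpleGraph V) (hT : G.IsTree)
    (hn : 4 ≤ Fintype.card V) :
    2 * (G.edgeFinset.filter fun e => ∀ x ∈ e, 3 ≤ G.degree x).card ≤
      Fintype.card V - 4 := by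
  classical
  set n := Fintype.card V with hn_def
  set E3 := G.edgeFinset.filter (fun e => ∀ x ∈ e, 3 ≤ G.degree x) with hE3
  rcases E3.eq_empty_or_nonempty with hE | hE
  · rw [hE]; simp
  set S := Finset.univ.filter (fun v => 3 ≤ G.degree v) with hS
  have hc := hT.isConnected
  have hdeg1 : ∀ v : V, 1 ≤ G.degree v := by
    intro v
    obtain ⟨u, hu⟩ := Fintype.exists_ne_of_one_lt_card (by omega) v
    obtain ⟨p⟩ := hc.preconnected v u
    cases p with
    | nil => exact absurd rfl hu
    | cons h q => exact (G.degree_pos_iff_exists_adj v).mpr ⟨_, h⟩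
  have hsum : ∑ v, G.degree v = 2 * G.edgeFinset.card := G.sum_degrees_eq_twice_card_edges
  have hedge : G.edgeFinset.card + 1 = n := hT.card_edgeFinset
  have hsplit : (∑ v ∈ S, G.degree v)
      + ∑ v ∈ Finset.univ.filter (fun v => ¬ 3 ≤ G.degree v), G.degree v
      = ∑ v, G.degree v := Finset.sum_filter_add_sum_filter_not _ _ _
  have h3 : 3 * S.card ≤ ∑ v ∈ S, G.degree v := by
    have := Finset.card_nsmul_le_sum S (fun v => G.degree v) 3
      (fun v hv => (Finset.mem_filter.mp hv).2)
    simpa [smul_eq_mul, mul_comm] using this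
  have h1 : (Finset.univ.filter (fun v => ¬ 3 ≤ G.degree v)).card * 1
      ≤ ∑ v ∈ Finset.univ.filter (fun v => ¬ 3 ≤ G.degree v), G.degree v := by
    have := Finset.card_nsmul_le_sum (Finset.univ.filter (fun v => ¬ 3 ≤ G.degree v))
      (fun v => G.degree v) 1 (fun v _ => hdeg1 v)
    simpa [smul_eq_mul] using this
  have hcards : S.card + (Finset.univ.filter (fun v => ¬ 3 ≤ G.degree v)).card = n :=
    Finset.card_filter_add_card_filter_not _
  have hrne : Nonempty V := Fintype.card_pos_iff.mp (by omega)
  obtain ⟨r⟩ := hrne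
  obtain ⟨e0, he0⟩ := hE
  have hmem0 := Finset.mem_filter.mp he0
  have hSne : S.Nonempty :=
    ⟨e0.out.1, Finset.mem_filter.mpr ⟨Finset.mem_univ _, hmem0.2 _ (Sym2.out_fst_mem e0)⟩⟩
  obtain ⟨v0, hv0S, hv0min⟩ := S.exists_min_image (fun v => G.dist v r) hSne
  have hinj : E3.card ≤ (S.erase v0).card := by
    apply Finset.card_le_card_of_injOn (farEnd G r)
    · intro e heE
      have hmem := Finset.mem_filter.mp heE
      have hes : e ∈ G.edgeSet := SimpleGraph.mem_edgeFinset.mp hmem.1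
      obtain ⟨w, hew, hadj, hdw⟩ := farEnd_spec G hT r hes
      have hfS : farEnd G r e ∈ S := Finset.mem_filter.mpr ⟨Finset.mem_univ _,
        hmem.2 _ (by have := Sym2.mem_mk_left (farEnd G r e) w; rwa [← hew] at this)⟩
      have hwS : w ∈ S := Finset.mem_filter.mpr ⟨Finset.mem_univ _,
        hmem.2 _ (by have := Sym2.mem_mk_right (farEnd G r e) w; rwa [← hew] at this)⟩
      refine Finset.mem_erase.mpr ⟨fun hfv0 => ?_, hfS⟩
      have h1 := hv0min w hwS
      rw [hfv0] at hdw
      omega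
    · intro e1 h1e e2 h2e hf
      have hmem1 := Finset.mem_filter.mp h1e
      have hmem2 := Finset.mem_filter.mp h2e
      obtain ⟨w1, hew1, hadj1, hdw1⟩ :=
        farEnd_spec G hT r (SimpleGraph.mem_edgeFinset.mp hmem1.1)
      obtain ⟨w2, hew2, hadj2, hdw2⟩ :=
        farEnd_spec G hT r (SimpleGraph.mem_edgeFinset.mp hmem2.1)
      rw [hf] at hadj1 hdw1 hew1
      have hw : w1 = w2 := tree_parent_unique G hT hadj1 hadj2 hdw1 hdw2
      rw [hew1, hw]; exact hew2.symm
  have herase : (S.erase v0).card = S.card - 1 := Finset.card_erase_of_mem hv0S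
  have hScard1 : 1 ≤ S.card := Finset.card_pos.mpr hSne
  omega
end
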